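/- For every integer k ≥ 0 and every z ∈ ℂ∖[−1,1], (1/(2πi)) ∫_{−1}^{1} √(1−t²)·U_k(t)/(t−z) dt = (i/2)·(J₊⁻¹(z))^{k+1}. -/

import Mathlib

open MeasureTheory Filter Set Polynomial

/-! Write `w = J₊⁻¹(z)`. With `a = (z - 1)^{1/2}` and `b = (z + 1)^{1/2}`, the numbers `w = z - ab`
and `2z - w = z + ab` multiply to `1`, so `z = (w + w⁻¹)/2`; and `|w| < 1` because
`|z - ab| < |z + ab|` amounts to `Re (z · conj (ab)) > 0`, which the principal branch guarantees
off `[-1, 1]`.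

Substituting `t = cos θ` turns the integral into `∫₀^π sin ((k+1)θ) · sin θ / (cos θ - z) dθ`.
Summing the geometric series in `w e^{± iθ}` gives the expansion
`sin θ / (cos θ - z) = -2 ∑ wⁿ sin (nθ)`, uniformly convergent since `|w| < 1`; by orthogonality of
the sines only `n = k + 1` survives, leaving `-π w^{k+1}`. -/

/-- The inverse Joukowsky transform mapping the slit plane to the unit disk,
`J₊⁻¹(z) = z - (z-1)^{1/2} (z+1)^{1/2}` with principal-branch square roots. -/
noncomputable def Jinv (z : ℂ) : ℂ :=
  z - (z - 1) ^ ((1 : ℂ) / 2) * (z + 1) ^ ((1 : ℂ) / 2)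

namespace Complex

lemma cpow_inv_two_mul_self (x : ℂ) : x ^ (2⁻¹ : ℂ) * x ^ (2⁻¹ : ℂ) = x := by
  rw [← sq, cpow_ofNat_inv_pow]

lemma re_cpow_inv_two_pos {x : ℂ} (hx : 0 < x.re ∨ x.im ≠ 0) : 0 < (x ^ (2⁻¹ : ℂ)).re := by
  rw [cpow_inv_two_re, Real.sqrt_pos]
  rcases hx with hre | him
  · linarith [norm_nonneg x]
  · linarith [neg_abs_le x.re, abs_re_lt_norm.2 him]

lemma im_cpow_inv_two_pos {x : ℂ} (hre : x.re < 0) (him : 0 ≤ x.im) :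
    0 < (x ^ (2⁻¹ : ℂ)).im := by
  rw [cpow_inv_two_im_eq_sqrt him, Real.sqrt_pos]
  linarith [norm_nonneg x]

lemma im_cpow_inv_two_mul_im_cpow_inv_two_nonneg {x y : ℂ} (h : x.im = y.im) :
    0 ≤ (x ^ (2⁻¹ : ℂ)).im * (y ^ (2⁻¹ : ℂ)).im := by
  rcases le_or_gt 0 x.im with hx | hx
  · rw [cpow_inv_two_im_eq_sqrt hx, cpow_inv_two_im_eq_sqrt (h ▸ hx)]
    positivity
  · rw [cpow_inv_two_im_eq_neg_sqrt hx, cpow_inv_two_im_eq_neg_sqrt (h ▸ hx), neg_mul_neg]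
    positivity

end Complex

open Complex ComplexConjugate in
lemma re_cpow_inv_two_sub_one_mul_conj_add_one_pos {z : ℂ} (hz : z ∉ ofReal '' Icc (-1 : ℝ) 1) :
    0 < ((z - 1) ^ (2⁻¹ : ℂ) * conj ((z + 1) ^ (2⁻¹ : ℂ))).re := by
  have him := im_cpow_inv_two_mul_im_cpow_inv_two_nonneg (x := z - 1) (y := z + 1) (by simp)
  rw [mul_re, conj_re, conj_im, mul_neg, sub_neg_eq_add]
  by_cases hreal : z.im = 0 ∧ z.re < -1
  · have ha := im_cpow_inv_two_pos (x := z - 1) (by simp only [sub_re, one_re]; linarith)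
      (by simp [hreal.1])
    have hb := im_cpow_inv_two_pos (x := z + 1) (by simp only [add_re, one_re]; linarith)
      (by simp [hreal.1])
    have : 0 ≤ ((z - 1) ^ (2⁻¹ : ℂ)).re := cpow_inv_two_re _ ▸ Real.sqrt_nonneg _
    have : 0 ≤ ((z + 1) ^ (2⁻¹ : ℂ)).re := cpow_inv_two_re _ ▸ Real.sqrt_nonneg _
    nlinarith
  · have hz' : 1 < z.re ∨ z.im ≠ 0 := by
      by_contra! h
      exact hz ⟨z.re, ⟨not_lt.1 fun h' ↦ hreal ⟨h.2, h'⟩, h.1⟩, ext rfl h.2.symm⟩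
    have ha := re_cpow_inv_two_pos (x := z - 1) (by simpa using hz')
    have hb := re_cpow_inv_two_pos (x := z + 1) <| hz'.imp
      (fun h ↦ by simp only [add_re, one_re]; linarith) (by simpa using ·)
    nlinarith

lemma Jinv_mul_two_mul_sub (z : ℂ) : Jinv z * (2 * z - Jinv z) = 1 := by
  simp only [Jinv, one_div]
  linear_combination (-((z + 1) ^ (2⁻¹ : ℂ) * (z + 1) ^ (2⁻¹ : ℂ))) * (z - 1).cpow_inv_two_mul_self
    - (z - 1) * (z + 1).cpow_inv_two_mul_self

open Complex ComplexConjugate in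
lemma norm_Jinv_lt_one {z : ℂ} (hz : z ∉ ofReal '' Icc (-1 : ℝ) 1) : ‖Jinv z‖ < 1 := by
  have hJ : Jinv z = z - (z - 1) ^ (2⁻¹ : ℂ) * (z + 1) ^ (2⁻¹ : ℂ) := by simp [Jinv, one_div]
  have hmul := Jinv_mul_two_mul_sub z
  have hab := re_cpow_inv_two_sub_one_mul_conj_add_one_pos hz
  have ha := (z - 1).cpow_inv_two_mul_self
  have hb := (z + 1).cpow_inv_two_mul_self
  rw [hJ] at hmul ⊢
  generalize (z - 1) ^ (2⁻¹ : ℂ) = a at *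
  generalize (z + 1) ^ (2⁻¹ : ℂ) = b at *
  have ha0 : a ≠ 0 := by
    rintro rfl
    exact hz ⟨1, by norm_num, by push_cast; linear_combination ha⟩
  have hre : 2 * (z * conj (a * b)).re = (normSq a + normSq b) * (a * conj b).re := by
    calc 2 * (z * conj (a * b)).re = ((a * a + b * b) * conj (a * b)).re := by
          rw [show a * a + b * b = 2 * z by linear_combination ha + hb, mul_assoc, mul_re]
          simp
      _ = (normSq a + normSq b) * (a * conj b).re := by
          simp only [mul_re, mul_im, add_re, add_im, conj_re, conj_im, normSq_apply]
          ring
  have hpos : 0 < (z * conj (a * b)).re := by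
    nlinarith [normSq_pos.2 ha0, normSq_nonneg b]
  have hlt : ‖z - a * b‖ < ‖z + a * b‖ := by
    have := normSq_sub z (a * b)
    have := normSq_add z (a * b)
    rw [← sq_lt_sq₀ (norm_nonneg _) (norm_nonneg _), ← normSq_eq_norm_sq, ← normSq_eq_norm_sq]
    linarith
  have hprod : ‖z - a * b‖ * ‖z + a * b‖ = 1 := by
    rw [← norm_mul, ← norm_one (α := ℂ)]
    congr 1
    linear_combination hmul
  nlinarith [norm_nonneg (z - a * b)]

open Complex in
lemma hasSum_pow_mul_sin {w : ℂ} (hw : ‖w‖ < 1) (θ : ℝ) :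
    HasSum (fun n : ℕ ↦ w ^ n * Real.sin (n * θ))
      (w * Real.sin θ / (1 - 2 * w * Real.cos θ + w ^ 2)) := by
  set e := exp (θ * I) with he_def
  have he : ‖e‖ = 1 := norm_exp_ofReal_mul_I θ
  have hpow (n : ℕ) : exp ((n * θ : ℝ) * I) = e ^ n := by
    rw [← exp_nat_mul]; push_cast; ring_nf
  have hpow_neg (n : ℕ) : exp (-(n * θ : ℝ) * I) = e⁻¹ ^ n := by
    rw [inv_pow, ← hpow, ← exp_neg]; ring_nf
  have hsin (x : ℝ) : (Real.sin x : ℂ) = (exp (-x * I) - exp (x * I)) * I / 2 := by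
    rw [ofReal_sin, sin]
  have hcos (x : ℝ) : (Real.cos x : ℂ) = (exp (x * I) + exp (-x * I)) / 2 := by
    rw [ofReal_cos, cos]
  have h1 : ‖w * e⁻¹‖ < 1 := by simpa [he] using hw
  have h2 : ‖w * e‖ < 1 := by simpa [he] using hw
  have hd1 : 1 - w * e⁻¹ ≠ 0 := sub_ne_zero.2 fun h ↦ by simp [← h] at h1
  have hd2 : 1 - w * e ≠ 0 := sub_ne_zero.2 fun h ↦ by simp [← h] at h2
  have hterm : (fun n : ℕ ↦ w ^ n * (Real.sin (n * θ) : ℂ))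
      = fun n ↦ ((w * e⁻¹) ^ n - (w * e) ^ n) * (I / 2) := by
    funext n
    rw [hsin, hpow, hpow_neg]
    ring
  have hval : w * Real.sin θ / (1 - 2 * w * Real.cos θ + w ^ 2)
      = ((1 - w * e⁻¹)⁻¹ - (1 - w * e)⁻¹) * (I / 2) := by
    have hinv : exp (-θ * I) = e⁻¹ := by rw [neg_mul, exp_neg]
    have he0 : e ≠ 0 := exp_ne_zero _
    have hden : 1 - 2 * w * ((e + e⁻¹) / 2) + w ^ 2 = (1 - w * e) * (1 - w * e⁻¹) := by
      field_simp; ring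
    rw [hsin, hcos, hinv, ← he_def, hden, inv_sub_inv hd1 hd2]
    ring
  rw [hterm, hval]
  exact ((hasSum_geometric_of_norm_lt_one h1).sub (hasSum_geometric_of_norm_lt_one h2)).mul_right _

open Real

lemma integral_cos_int_mul (j : ℤ) :
    ∫ θ in (0 : ℝ)..π, cos (j * θ) = if j = 0 then π else 0 := by
  split_ifs with hj
  · simp [hj]
  · have hj' : (j : ℝ) ≠ 0 := Int.cast_ne_zero.2 hj
    simp [intervalIntegral.integral_comp_mul_left (fun θ ↦ cos θ) hj', sin_int_mul_pi]

lemma integral_sin_nat_mul_mul_sin_nat_mul {m : ℕ} (hm : m ≠ 0) (n : ℕ) :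
    ∫ θ in (0 : ℝ)..π, sin (m * θ) * sin (n * θ) = if n = m then π / 2 else 0 := by
  have hsum : ((m + n : ℕ) : ℤ) ≠ 0 := by omega
  have hprod (θ : ℝ) : sin (m * θ) * sin (n * θ)
      = (cos (((m - n : ℤ) : ℝ) * θ) - cos (((m + n : ℕ) : ℤ) * θ)) / 2 := by
    rw [eq_div_iff two_ne_zero, mul_comm, ← mul_assoc, two_mul_sin_mul_sin]
    push_cast
    ring_nf
  simp_rw [hprod]
  have hdiff : (m : ℤ) - n = 0 ↔ n = m := by omega
  rw [intervalIntegral.integral_div, intervalIntegral.integral_sub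
    ((by fun_prop : Continuous _).intervalIntegrable _ _)
    ((by fun_prop : Continuous _).intervalIntegrable _ _),
    integral_cos_int_mul, integral_cos_int_mul, if_neg hsum]
  simp only [hdiff]
  split_ifs <;> ring

lemma hasSum_sin_div_cos_sub {w z : ℂ} (hw : ‖w‖ < 1) (hwz : w * (2 * z - w) = 1) (θ : ℝ) :
    HasSum (fun n : ℕ ↦ -2 * (w ^ n * sin (n * θ))) (sin θ / (cos θ - z)) := by
  have hw0 : w ≠ 0 := left_ne_zero_of_mul_eq_one hwz
  have hden : 1 - 2 * w * cos θ + w ^ 2 = -(2 * w) * (cos θ - z) := by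
    linear_combination -hwz
  have h := (hasSum_pow_mul_sin hw θ).mul_left (-2)
  rwa [hden, show -(2 * w) * (cos θ - z) = w * (-2 * (cos θ - z)) by ring,
    mul_div_mul_left _ _ hw0, mul_div_assoc', mul_div_mul_left _ _ (by norm_num)] at h

lemma integral_sin_mul_sin_div_cos_sub {w z : ℂ} (hw : ‖w‖ < 1) (hwz : w * (2 * z - w) = 1)
    {m : ℕ} (hm : m ≠ 0) :
    ∫ θ in (0 : ℝ)..π, (sin (m * θ) : ℂ) * (sin θ / (cos θ - z)) = -π * w ^ m := by
  have hsum : HasSum (fun n : ℕ ↦ ∫ θ in (0 : ℝ)..π, (sin (m * θ) : ℂ) * (-2 * (w ^ n * sin (n * θ))))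
      (∫ θ in (0 : ℝ)..π, (sin (m * θ) : ℂ) * (sin θ / (cos θ - z))) := by
    refine intervalIntegral.hasSum_integral_of_dominated_convergence (fun n _ ↦ 2 * ‖w‖ ^ n)
      (fun n ↦ (by fun_prop : Continuous _).aestronglyMeasurable) (fun n ↦ ?_)
      (ae_of_all _ fun _ _ ↦ (summable_geometric_of_lt_one (norm_nonneg w) hw).mul_left 2)
      intervalIntegrable_const
      (ae_of_all _ fun θ _ ↦ (hasSum_sin_div_cos_sub hw hwz θ).mul_left _)
    refine ae_of_all _ fun θ _ ↦ ?_
    simp only [norm_mul, norm_neg, norm_pow, Complex.norm_real, Real.norm_eq_abs, Complex.norm_ofNat]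
    have := abs_sin_le_one (m * θ)
    have := abs_sin_le_one (n * θ)
    calc |sin (m * θ)| * (2 * (‖w‖ ^ n * |sin (n * θ)|)) ≤ 1 * (2 * (‖w‖ ^ n * 1)) := by gcongr
      _ = 2 * ‖w‖ ^ n := by ring
  have hterm (n : ℕ) : ∫ θ in (0 : ℝ)..π, (sin (m * θ) : ℂ) * (-2 * (w ^ n * sin (n * θ)))
      = if n = m then -π * w ^ m else 0 := by
    have hint : ∫ θ in (0 : ℝ)..π, (sin (m * θ) : ℂ) * (-2 * (w ^ n * sin (n * θ)))
        = -2 * w ^ n * ((∫ θ in (0 : ℝ)..π, sin (m * θ) * sin (n * θ) : ℝ) : ℂ) := by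
      rw [← intervalIntegral.integral_ofReal, ← intervalIntegral.integral_const_mul]
      congr 1 with θ
      push_cast
      ring
    rw [hint, integral_sin_nat_mul_mul_sin_nat_mul hm]
    split_ifs with h
    · subst h; push_cast; ring
    · simp
  simp only [hterm] at hsum
  exact hsum.unique (hasSum_ite_eq m _)

lemma integral_comp_cos {E : Type*} [NormedAddCommGroup E] [NormedSpace ℝ E] {g : ℝ → E}
    (hg : ContinuousOn g (Icc (-1) 1)) :
    ∫ t in (-1 : ℝ)..1, g t = ∫ θ in (0 : ℝ)..π, sin θ • g (cos θ) := by
  have hmaps : cos '' uIcc 0 π ⊆ Icc (-1) 1 := by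
    rintro _ ⟨θ, -, rfl⟩
    exact ⟨neg_one_le_cos θ, cos_le_one θ⟩
  have h := intervalIntegral.integral_deriv_smul_comp' (fun θ _ ↦ hasDerivAt_cos θ)
    (by fun_prop : Continuous fun θ ↦ -sin θ).continuousOn (hg.mono hmaps)
  rw [cos_zero, cos_pi, intervalIntegral.integral_symm (-1)] at h
  simpa only [Function.comp_apply, neg_smul, intervalIntegral.integral_neg, neg_inj] using h.symm

lemma sqrt_one_sub_cos_sq_mul_U_complex_cos (n : ℤ) {θ : ℝ} (hθ : θ ∈ Icc 0 π) :
    (√(1 - cos θ ^ 2) : ℂ) * (Chebyshev.U ℂ n).eval (cos θ : ℂ) = sin ((n + 1) * θ) := by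
  rw [← sin_sq, sqrt_sq (sin_nonneg_of_nonneg_of_le_pi hθ.1 hθ.2), mul_comm]
  push_cast
  exact Chebyshev.U_complex_cos θ n

theorem cauchy_transform_weighted_chebyshevU (k : ℕ) (z : ℂ)
    (hz : z ∉ Complex.ofReal '' Set.Icc (-1 : ℝ) 1) :
    (1 / (2 * (Real.pi : ℂ) * Complex.I)) *
        ∫ t in (-1 : ℝ)..1,
          (Real.sqrt (1 - t ^ 2) : ℂ) * (Polynomial.Chebyshev.U ℂ k).eval (t : ℂ)
            / ((t : ℂ) - z)
      = (Complex.I / 2) * (Jinv z) ^ (k + 1) := by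
  have hcont : ContinuousOn (fun t : ℝ ↦
      (√(1 - t ^ 2) : ℂ) * (Chebyshev.U ℂ k).eval (t : ℂ) / ((t : ℂ) - z)) (Icc (-1) 1) :=
    ContinuousOn.div (by fun_prop) (by fun_prop) fun t ht h ↦ hz ⟨t, ht, (sub_eq_zero.1 h)⟩
  have hsubst : ∀ θ ∈ uIcc 0 π, sin θ • ((√(1 - cos θ ^ 2) : ℂ) *
      (Chebyshev.U ℂ k).eval (cos θ : ℂ) / ((cos θ : ℂ) - z))
      = (sin ((k + 1 : ℕ) * θ) : ℂ) * (sin θ / (cos θ - z)) := by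
    intro θ hθ
    rw [uIcc_of_le pi_pos.le] at hθ
    rw [Complex.real_smul, sqrt_one_sub_cos_sq_mul_U_complex_cos k hθ]
    push_cast
    ring
  rw [integral_comp_cos hcont, intervalIntegral.integral_congr hsubst,
    integral_sin_mul_sin_div_cos_sub (norm_Jinv_lt_one hz) (Jinv_mul_two_mul_sub z)
      k.succ_ne_zero]
  field_simp
  rw [Complex.I_sq]
  ring
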